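/- arXiv:2107.03322 — 10 statements merged into one kernel-verified Lean document; each statement's English description precedes it below -/
import Mathlib

section
/- Let L : ℝ^p → ℝ be convex differentiable and C strictly increasing with C(0)=0. For t, t' > 0 let θ(t), θ(t') be the minimizers of C(s)L(θ)+‖θ‖²/2 for s = t, t'. Then ‖θ(t') − θ(t)‖ ≤ (|C(t') − C(t)|/C(t))·‖θ(t)‖. -/
open RealInnerProductSpace

/-- Variational inequality for minimizer of c·L + ‖·‖²/2. -/
lemma var_ineq {p : ℕ} (L : EuclideanSpace ℝ (Fin p) → ℝ)
    (hL : ConvexOn ℝ Set.univ L) {c : ℝ} (hc : 0 < c)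
    {x : EuclideanSpace ℝ (Fin p)}
    (hx : ∀ y, c * L x + ‖x‖ ^ 2 / 2 ≤ c * L y + ‖y‖ ^ 2 / 2)
    (y : EuclideanSpace ℝ (Fin p)) :
    0 ≤ c * (L y - L x) + ⟪x, y - x⟫ := by
  have key : ∀ τ : ℝ, 0 < τ → τ ≤ 1 →
      0 ≤ c * (L y - L x) + ⟪x, y - x⟫ + τ * ‖y - x‖ ^ 2 / 2 := by
    intro τ hτ0 hτ1
    have hconv := hL.2 (Set.mem_univ x) (Set.mem_univ y)
      (show (0:ℝ) ≤ 1 - τ by linarith) hτ0.le (by ring)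
    set z : EuclideanSpace ℝ (Fin p) := (1 - τ) • x + τ • y with hz
    have hmin := hx z
    have hnorm : ‖z‖ ^ 2 = ‖x‖ ^ 2 + 2 * τ * ⟪x, y - x⟫ + τ ^ 2 * ‖y - x‖ ^ 2 := by
      have : z = x + τ • (y - x) := by
        simp [hz, smul_sub, sub_smul]; abel
      rw [this, norm_add_sq_real, real_inner_smul_right, norm_smul]
      simp [abs_of_pos hτ0]
      ring
    have h1 : c * L z ≤ c * ((1 - τ) * L x + τ * L y) := by
      exact mul_le_mul_of_nonneg_left hconv (le_of_lt hc)
    nlinarith [hmin, h1, hnorm]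
  by_contra h
  push_neg at h
  set A := c * (L y - L x) + ⟪x, y - x⟫
  set K := ‖y - x‖ ^ 2 / 2 with hK
  have hK0 : 0 ≤ K := by positivity
  have hτ : 0 < min 1 ((-A) / (K + 1)) := by
    apply lt_min one_pos
    apply div_pos (by linarith) (by linarith)
  have := key _ hτ (min_le_left _ _)
  have h2 : min 1 ((-A) / (K + 1)) * K ≤ ((-A) / (K + 1)) * K :=
    mul_le_mul_of_nonneg_right (min_le_right _ _) hK0
  have h3 : ((-A) / (K + 1)) * K < -A := by
    rw [div_mul_eq_mul_div, div_lt_iff₀ (by linarith)]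
    nlinarith
  have : min 1 ((-A)/(K+1)) * ‖y - x‖ ^ 2 / 2 = min 1 ((-A)/(K+1)) * K := by
    rw [hK]; ring
  linarith [key _ hτ (min_le_left _ _)]

theorem path_lipschitz_bound {p : ℕ}
    (L : EuclideanSpace ℝ (Fin p) → ℝ) (hL : ConvexOn ℝ Set.univ L)
    (L' : EuclideanSpace ℝ (Fin p) → EuclideanSpace ℝ (Fin p))
    (hdiff : ∀ x, HasGradientAt L (L' x) x)
    (C : ℝ → ℝ) (hC0 : C 0 = 0) (hCmono : StrictMonoOn C (Set.Ici 0))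
    (θ : ℝ → EuclideanSpace ℝ (Fin p))
    (hθ : ∀ s ≥ 0, ∀ y, C s * L (θ s) + ‖θ s‖ ^ 2 / 2 ≤ C s * L y + ‖y‖ ^ 2 / 2)
    (t t' : ℝ) (ht : 0 < t) (ht' : 0 < t') :
    ‖θ t' - θ t‖ ≤ (|C t' - C t| / C t) * ‖θ t‖ := by
  have hc : 0 < C t := by
    have := hCmono (Set.self_mem_Ici) (Set.mem_Ici.2 ht.le) ht
    rwa [hC0] at this
  have hc' : 0 < C t' := by
    have := hCmono (Set.self_mem_Ici) (Set.mem_Ici.2 ht'.le) ht'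
    rwa [hC0] at this
  set a := θ t
  set b := θ t'
  have h1 := var_ineq L hL hc (fun y => hθ t ht.le y) b
  have h2 := var_ineq L hL hc' (fun y => hθ t' ht'.le y) a
  -- key: C t * ‖b - a‖² ≤ (C t' - C t) * ⟪a, b - a⟫
  have hinner : ⟪a, a - b⟫ = -⟪a, b - a⟫ := by
    rw [← inner_neg_right]; congr 1; abel
  have hbin : ⟪b, a - b⟫ = ⟪a, a - b⟫ - ‖b - a‖ ^ 2 := by
    simp only [inner_sub_left, inner_sub_right, real_inner_self_eq_norm_sq]
    rw [real_inner_comm b a, norm_sub_sq_real]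
    ring
  have key : C t * ‖b - a‖ ^ 2 ≤ (C t' - C t) * ⟪a, b - a⟫ := by
    -- multiply h1 by C t', h2 by C t, add
    nlinarith [mul_le_mul_of_nonneg_left h1 hc'.le, mul_le_mul_of_nonneg_left h2 hc.le,
      hinner, hbin]
  have hcs : ⟪a, b - a⟫ ≤ ‖a‖ * ‖b - a‖ := real_inner_le_norm a (b - a)
  have hcs2 : (C t' - C t) * ⟪a, b - a⟫ ≤ |C t' - C t| * (‖a‖ * ‖b - a‖) := by
    calc (C t' - C t) * ⟪a, b - a⟫ ≤ |(C t' - C t) * ⟪a, b - a⟫| := le_abs_self _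
    _ = |C t' - C t| * |⟪a, b - a⟫| := abs_mul _ _
    _ ≤ |C t' - C t| * (‖a‖ * ‖b - a‖) := by
        apply mul_le_mul_of_nonneg_left _ (abs_nonneg _)
        exact abs_real_inner_le_norm a (b - a)
  rcases eq_or_lt_of_le (norm_nonneg (b - a)) with h0 | h0
  · rw [← h0]; positivity
  · rw [div_mul_eq_mul_div, le_div_iff₀ hc]
    have hfin : C t * ‖b - a‖ ^ 2 ≤ |C t' - C t| * (‖a‖ * ‖b - a‖) := le_trans key hcs2
    nlinarith [hfin, h0]
end

section
/- With θ(t) the ℓ2-regularized solution path (minimizer of C(t)L(θ)+‖θ‖²/2 for convex differentiable L and strictly increasing C with C(0)=0), the map t ↦ ‖θ(t)‖ is nondecreasing on [0,∞). -/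
theorem path_norm_monotone {p : ℕ}
    (L : EuclideanSpace ℝ (Fin p) → ℝ) (hL : ConvexOn ℝ Set.univ L)
    (L' : EuclideanSpace ℝ (Fin p) → EuclideanSpace ℝ (Fin p))
    (hdiff : ∀ x, HasGradientAt L (L' x) x)
    (C : ℝ → ℝ) (hC0 : C 0 = 0) (hCmono : StrictMonoOn C (Set.Ici 0))
    (θ : ℝ → EuclideanSpace ℝ (Fin p))
    (hθ : ∀ s ≥ 0, ∀ y, C s * L (θ s) + ‖θ s‖ ^ 2 / 2 ≤ C s * L y + ‖y‖ ^ 2 / 2) :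
    MonotoneOn (fun t => ‖θ t‖) (Set.Ici 0) := by
  intro s hs t ht hst
  rcases eq_or_lt_of_le hst with rfl | hlt
  · exact le_refl _
  · have hCs : 0 ≤ C s := by
      rcases eq_or_lt_of_le (Set.mem_Ici.mp hs) with rfl | h0
      · simp [hC0]
      · have := hCmono (le_refl (0:ℝ)) hs h0
        linarith [hC0 ▸ this]
    have hClt : C s < C t := hCmono hs ht hlt
    have h1 := hθ s hs (θ t)
    have h2 := hθ t ht (θ s)
    have hLle : L (θ t) ≤ L (θ s) := by
      by_contra h
      push_neg at h
      nlinarith [mul_pos (sub_pos.2 hClt) (sub_pos.2 h)]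
    have hsq : ‖θ s‖ ^ 2 ≤ ‖θ t‖ ^ 2 := by
      nlinarith [mul_nonneg hCs (sub_nonneg.2 hLle)]
    simp only
    nlinarith [norm_nonneg (θ s), norm_nonneg (θ t)]
end

section
/- With θ(t) the ℓ2-regularized solution path, the map t ↦ ‖θ(t)‖/C(t) is nonincreasing on (0,∞). -/
/-!
At a minimiser `x` of `c • L + ‖·‖² / 2` the vector `-x / c` is a subgradient of `L` at `x`.
Monotonicity of the subdifferential of the convex `L` applied to `θ s` and `θ t` gives
`C t ‖θ s‖² + C s ‖θ t‖² ≤ (C s + C t) ⟪θ s, θ t⟫`, and after Cauchy–Schwarz this reads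
`(C t ‖θ s‖ - C s ‖θ t‖) (‖θ s‖ - ‖θ t‖) ≤ 0`; together with `C s ≤ C t` this forces
`‖θ t‖ / C t ≤ ‖θ s‖ / C s`.
-/

open Set Filter Topology RealInnerProductSpace

lemma nonneg_of_forall_nonneg_add_mul {a b : ℝ} (h : ∀ l, 0 < l → l ≤ 1 → 0 ≤ a + l * b) :
    0 ≤ a := by
  have hlim : Tendsto (fun l => a + l * b) (𝓝[>] 0) (𝓝 a) := by
    have : Continuous fun l : ℝ => a + l * b := by fun_prop
    simpa using (this.tendsto 0).mono_left nhdsWithin_le_nhds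
  refine ge_of_tendsto hlim ?_
  filter_upwards [Ioc_mem_nhdsGT one_pos] with l hl using h l hl.1 hl.2

lemma div_le_div_of_mul_sq_add_mul_sq_le {a b x y : ℝ} (ha : 0 < a) (hab : a ≤ b) (hx : 0 ≤ x)
    (h : b * x ^ 2 + a * y ^ 2 ≤ (a + b) * (x * y)) : y / b ≤ x / a := by
  rw [div_le_div_iff₀ (ha.trans_le hab) ha]
  nlinarith [mul_le_mul_of_nonneg_right hab hx]

variable {E : Type*} [NormedAddCommGroup E] [InnerProductSpace ℝ E]

lemma ConvexOn.sub_add_inner_nonneg_of_isMinOn {f : E → ℝ} (hf : ConvexOn ℝ univ f) {x : E}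
    (hx : IsMinOn (fun y => f y + ‖y‖ ^ 2 / 2) univ x) (y : E) :
    0 ≤ f y - f x + ⟪x, y - x⟫ := by
  refine nonneg_of_forall_nonneg_add_mul (b := ‖y - x‖ ^ 2 / 2) fun l hl0 hl1 => ?_
  have hconv : f (x + l • (y - x)) ≤ (1 - l) * f x + l * f y := by
    have := hf.2 (mem_univ x) (mem_univ y) (sub_nonneg.2 hl1) hl0.le (by ring)
    rwa [show (1 - l) • x + l • y = x + l • (y - x) by module] at this
  have hnorm : ‖x + l • (y - x)‖ ^ 2 = ‖x‖ ^ 2 + 2 * l * ⟪x, y - x⟫ + l ^ 2 * ‖y - x‖ ^ 2 := by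
    rw [norm_add_sq_real, inner_smul_right, norm_smul, Real.norm_of_nonneg hl0.le]
    ring
  have hmin := isMinOn_univ_iff.1 hx (x + l • (y - x))
  refine nonneg_of_mul_nonneg_right ?_ hl0
  linear_combination hmin + hconv + hnorm / 2

lemma ConvexOn.mul_norm_sq_add_mul_norm_sq_le_inner {f : E → ℝ} (hf : ConvexOn ℝ univ f)
    {a b : ℝ} (ha : 0 ≤ a) (hb : 0 ≤ b) {u v : E}
    (hu : IsMinOn (fun y => a * f y + ‖y‖ ^ 2 / 2) univ u)
    (hv : IsMinOn (fun y => b * f y + ‖y‖ ^ 2 / 2) univ v) :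
    b * ‖u‖ ^ 2 + a * ‖v‖ ^ 2 ≤ (a + b) * ⟪u, v⟫ := by
  have hu' := (hf.smul ha).sub_add_inner_nonneg_of_isMinOn hu v
  have hv' := (hf.smul hb).sub_add_inner_nonneg_of_isMinOn hv u
  simp only [smul_eq_mul, inner_sub_right, real_inner_self_eq_norm_sq,
    real_inner_comm u v] at hu' hv'
  linear_combination b * hu' + a * hv'

theorem path_norm_over_C_antitone_general {p : ℕ}
    (L : EuclideanSpace ℝ (Fin p) → ℝ) (hL : ConvexOn ℝ Set.univ L)
    (C : ℝ → ℝ) (hCpos : ∀ t > 0, 0 < C t) (hCmono : StrictMonoOn C (Set.Ioi 0))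
    (θ : ℝ → EuclideanSpace ℝ (Fin p))
    (hθ : ∀ s > 0, ∀ y, C s * L (θ s) + ‖θ s‖ ^ 2 / 2 ≤ C s * L y + ‖y‖ ^ 2 / 2) :
    AntitoneOn (fun t => ‖θ t‖ / C t) (Set.Ioi 0) := by
  intro s hs t ht hst
  have hCs := hCpos s hs
  have hCt := hCpos t ht
  have hinner := hL.mul_norm_sq_add_mul_norm_sq_le_inner hCs.le hCt.le
    (isMinOn_univ_iff.2 (hθ s hs)) (isMinOn_univ_iff.2 (hθ t ht))
  have hcs := mul_le_mul_of_nonneg_left (real_inner_le_norm (θ s) (θ t)) (add_pos hCs hCt).le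
  exact div_le_div_of_mul_sq_add_mul_sq_le hCs (hCmono.monotoneOn hs ht hst) (norm_nonneg _)
    (hinner.trans hcs)

theorem path_norm_over_C_antitone {p : ℕ}
    (L : EuclideanSpace ℝ (Fin p) → ℝ) (hL : ConvexOn ℝ Set.univ L)
    (C : ℝ → ℝ) (hCpos : ∀ t > 0, 0 < C t) (hCmono : StrictMonoOn C (Set.Ioi 0))
    (hClim : Filter.Tendsto C (nhdsWithin 0 (Set.Ioi 0)) (nhds 0))
    (θ : ℝ → EuclideanSpace ℝ (Fin p))
    (hθ : ∀ s > 0, ∀ y, C s * L (θ s) + ‖θ s‖ ^ 2 / 2 ≤ C s * L y + ‖y‖ ^ 2 / 2) :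
    AntitoneOn (fun t => ‖θ t‖ / C t) (Set.Ioi 0) :=
  path_norm_over_C_antitone_general L hL C hCpos hCmono θ hθ
end

section
/- Let L : ℝ^p → ℝ be continuous convex with a finite minimum-ℓ2-norm minimizer θ⋆, and C(t) → ∞ as t → ∞. Then the ℓ2-regularized solution path θ(t) := argmin_θ [C(t)L(θ) + ‖θ‖²/2] converges to θ⋆ as t → ∞. -/
theorem path_converges_to_min_norm_minimizer {p : ℕ}
    (L : EuclideanSpace ℝ (Fin p) → ℝ) (hLc : Continuous L) (hL : ConvexOn ℝ Set.univ L)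
    (θstar : EuclideanSpace ℝ (Fin p))
    (hmin : ∀ y, L θstar ≤ L y)
    (hminnorm : ∀ y, (∀ z, L y ≤ L z) → ‖θstar‖ ≤ ‖y‖)
    (C : ℝ → ℝ) (hCpos : ∀ t > 0, 0 < C t) (hCmono : StrictMonoOn C (Set.Ioi 0))
    (hClim : Filter.Tendsto C Filter.atTop Filter.atTop)
    (θ : ℝ → EuclideanSpace ℝ (Fin p))
    (hθ : ∀ s > 0, ∀ y, C s * L (θ s) + ‖θ s‖ ^ 2 / 2 ≤ C s * L y + ‖y‖ ^ 2 / 2) :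
    Filter.Tendsto θ Filter.atTop (nhds θstar) := by
  -- basic bounds
  have hnorm : ∀ s > 0, ‖θ s‖ ≤ ‖θstar‖ := by
    intro s hs
    have h1 := hθ s hs θstar
    have h2 : C s * L θstar ≤ C s * L (θ s) :=
      mul_le_mul_of_nonneg_left (hmin (θ s)) (hCpos s hs).le
    nlinarith [norm_nonneg (θ s), norm_nonneg θstar]
  have hLb : ∀ s > 0, C s * (L (θ s) - L θstar) ≤ ‖θstar‖ ^ 2 / 2 := by
    intro s hs
    have h1 := hθ s hs θstar
    nlinarith [sq_nonneg ‖θ s‖]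
  rw [Metric.tendsto_atTop]
  intro ε hε
  set S : Set (EuclideanSpace ℝ (Fin p)) :=
    Metric.closedBall 0 ‖θstar‖ ∩ {y | ε ≤ dist y θstar} with hS
  have hScompact : IsCompact S := by
    apply (isCompact_closedBall (0 : EuclideanSpace ℝ (Fin p)) ‖θstar‖).inter_right
    exact isClosed_le continuous_const (continuous_id.dist continuous_const)
  rcases Set.eq_empty_or_nonempty S with hSe | hSne
  · refine ⟨1, fun s hs => ?_⟩
    have hs0 : (0:ℝ) < s := lt_of_lt_of_le one_pos hs
    have hball : θ s ∈ Metric.closedBall (0 : EuclideanSpace ℝ (Fin p)) ‖θstar‖ := by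
      simpa [Metric.mem_closedBall, dist_eq_norm] using hnorm s hs0
    by_contra hcon
    push_neg at hcon
    have : θ s ∈ S := ⟨hball, hcon⟩
    simp [hSe] at this
  · obtain ⟨y₀, hy₀S, hy₀min⟩ := hScompact.exists_isMinOn hSne hLc.continuousOn
    set δ := L y₀ - L θstar with hδ
    have hεy₀ : ε ≤ dist y₀ θstar := hy₀S.2
    have hδpos : 0 < δ := by
      by_contra hcon
      push_neg at hcon
      have hy₀eq : L y₀ = L θstar := le_antisymm (by linarith [hδ]) (hmin y₀)
      have hy₀minim : ∀ z, L y₀ ≤ L z := fun z => hy₀eq ▸ hmin z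
      have h1 : ‖θstar‖ ≤ ‖y₀‖ := hminnorm y₀ hy₀minim
      have h2 : ‖y₀‖ ≤ ‖θstar‖ := by
        simpa [Metric.mem_closedBall, dist_eq_norm] using hy₀S.1
      -- midpoint
      set m : EuclideanSpace ℝ (Fin p) := (1/2 : ℝ) • y₀ + (1/2 : ℝ) • θstar with hm
      have hLm : L m ≤ L θstar := by
        have := hL.2 (Set.mem_univ y₀) (Set.mem_univ θstar)
          (by norm_num : (0:ℝ) ≤ 1/2) (by norm_num : (0:ℝ) ≤ 1/2) (by norm_num)
        calc L m ≤ (1/2) * L y₀ + (1/2) * L θstar := this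
          _ = L θstar := by rw [hy₀eq]; ring
      have hmmin : ∀ z, L m ≤ L z := fun z => le_trans hLm (hmin z)
      have h3 : ‖θstar‖ ≤ ‖m‖ := hminnorm m hmmin
      -- parallelogram
      have hpar : ‖y₀ + θstar‖ ^ 2 + ‖y₀ - θstar‖ ^ 2 = 2 * (‖y₀‖ ^ 2 + ‖θstar‖ ^ 2) := by
        have := parallelogram_law_with_norm ℝ y₀ θstar
        nlinarith [this]
      have hmnorm : ‖m‖ = ‖y₀ + θstar‖ / 2 := by
        rw [hm, ← smul_add, norm_smul]
        simp [abs_of_nonneg]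
        ring
      have hdist : dist y₀ θstar = ‖y₀ - θstar‖ := dist_eq_norm _ _
      have h4 : ε ≤ ‖y₀ - θstar‖ := hdist ▸ hεy₀
      have h5 : ‖m‖ ^ 2 = ‖y₀ + θstar‖ ^ 2 / 4 := by rw [hmnorm]; ring
      have h6 : ‖y₀‖ = ‖θstar‖ := le_antisymm h2 h1
      have h7 : ‖θstar‖ ^ 2 ≤ ‖m‖ ^ 2 := pow_le_pow_left₀ (norm_nonneg _) h3 2
      have h8 : ε ^ 2 ≤ ‖y₀ - θstar‖ ^ 2 := pow_le_pow_left₀ hε.le h4 2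
      have h6sq : ‖y₀‖ ^ 2 = ‖θstar‖ ^ 2 := by rw [h6]
      have h9 : 0 < ε ^ 2 := pow_pos hε 2
      linarith
    -- choose N large
    obtain ⟨N, hN⟩ := Filter.eventually_atTop.mp
      (hClim.eventually_ge_atTop (‖θstar‖ ^ 2 / (2 * δ) + 1))
    refine ⟨max N 1, fun s hs => ?_⟩
    have hs1 : (1:ℝ) ≤ s := le_trans (le_max_right N 1) hs
    have hs0 : (0:ℝ) < s := lt_of_lt_of_le one_pos hs1
    have hCs : ‖θstar‖ ^ 2 / (2 * δ) + 1 ≤ C s := hN s (le_trans (le_max_left N 1) hs)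
    have hCspos : 0 < C s := hCpos s hs0
    have hLs : L (θ s) - L θstar < δ := by
      have h1 := hLb s hs0
      have h2 : ‖θstar‖ ^ 2 / (2 * δ) < C s := by
        have : 0 ≤ ‖θstar‖ ^ 2 / (2 * δ) := by positivity
        linarith
      have h3 : ‖θstar‖ ^ 2 < C s * (2 * δ) := by
        rwa [div_lt_iff₀ (by positivity)] at h2
      nlinarith
    have hball : θ s ∈ Metric.closedBall (0 : EuclideanSpace ℝ (Fin p)) ‖θstar‖ := by
      simpa [Metric.mem_closedBall, dist_eq_norm] using hnorm s hs0
    by_contra hcon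
    push_neg at hcon
    have hmem : θ s ∈ S := ⟨hball, hcon⟩
    have hLy : L y₀ ≤ L (θ s) := hy₀min hmem
    have hδ' : δ = L y₀ - L θstar := hδ
    linarith
end

section
/- The one-dimensional logistic loss L(θ) = ln(1 + e^{−θ}) satisfies: for all θ, δ ∈ ℝ with |δ| ≤ 1/2, |L'(θ+δ) − L'(θ) − L''(θ)δ| ≤ 2·L''(θ)·δ². -/
lemma exp_taylor2 (x : ℝ) (hx : |x| ≤ 1) : |Real.exp x - 1 - x| ≤ 2 * x ^ 2 := by
  have h := Real.exp_bound hx (n := 2) (by norm_num)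
  have hs : (∑ i ∈ Finset.range 2, x ^ i / (Nat.factorial i)) = 1 + x := by
    simp [Finset.sum_range_succ, Nat.factorial]
  rw [hs] at h
  have : |Real.exp x - 1 - x| = |Real.exp x - (1 + x)| := by ring_nf
  rw [this]
  calc |Real.exp x - (1 + x)| ≤ |x| ^ 2 * ((2 : ℕ).succ / ((Nat.factorial 2) * 2)) := h
    _ = (3 / 4) * x ^ 2 := by rw [sq_abs]; norm_num [Nat.factorial]; ring
    _ ≤ 2 * x ^ 2 := by nlinarith [sq_nonneg x]

theorem logistic_local_hessian_lipschitz (θ δ : ℝ) (hδ : |δ| ≤ 1 / 2) :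
    |(-(1 / (1 + Real.exp (θ + δ)))) - (-(1 / (1 + Real.exp θ)))
        - (Real.exp θ / (1 + Real.exp θ) ^ 2) * δ|
      ≤ 2 * (Real.exp θ / (1 + Real.exp θ) ^ 2) * δ ^ 2 := by
  have hδ1 : |δ| ≤ 1 := le_trans hδ (by norm_num)
  have hδ1' : |(-δ)| ≤ 1 := by rwa [abs_neg]
  have hs : (0:ℝ) < Real.exp θ := Real.exp_pos θ
  have he : (0:ℝ) < Real.exp δ := Real.exp_pos δ
  have hA : (0:ℝ) < 1 + Real.exp θ := by linarith
  have hB : (0:ℝ) < 1 + Real.exp θ * Real.exp δ := by positivity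
  have hadd : Real.exp (θ + δ) = Real.exp θ * Real.exp δ := Real.exp_add θ δ
  -- inner bound
  have k1 : |Real.exp δ - 1 - δ| ≤ 2 * δ ^ 2 := exp_taylor2 δ hδ1
  have k2 : |Real.exp δ * (1 - δ) - 1| ≤ 2 * δ ^ 2 * Real.exp δ := by
    have h0 : Real.exp δ * (1 - δ) - 1 = -(Real.exp δ * (Real.exp (-δ) - 1 - (-δ))) := by
      rw [Real.exp_neg]
      field_simp
      ring
    rw [h0, abs_neg, abs_mul, abs_of_pos he]
    have := exp_taylor2 (-δ) hδ1'
    calc Real.exp δ * |Real.exp (-δ) - 1 - (-δ)| ≤ Real.exp δ * (2 * (-δ) ^ 2) :=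
          mul_le_mul_of_nonneg_left this he.le
      _ = 2 * δ ^ 2 * Real.exp δ := by ring
  have key : |(Real.exp δ - 1 - δ) + Real.exp θ * (Real.exp δ * (1 - δ) - 1)|
      ≤ 2 * δ ^ 2 * (1 + Real.exp θ * Real.exp δ) := by
    calc |(Real.exp δ - 1 - δ) + Real.exp θ * (Real.exp δ * (1 - δ) - 1)|
        ≤ |Real.exp δ - 1 - δ| + |Real.exp θ * (Real.exp δ * (1 - δ) - 1)| := abs_add_le _ _
      _ = |Real.exp δ - 1 - δ| + Real.exp θ * |Real.exp δ * (1 - δ) - 1| := by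
          rw [abs_mul, abs_of_pos hs]
      _ ≤ 2 * δ ^ 2 + Real.exp θ * (2 * δ ^ 2 * Real.exp δ) := by
          have := mul_le_mul_of_nonneg_left k2 hs.le
          linarith
      _ = 2 * δ ^ 2 * (1 + Real.exp θ * Real.exp δ) := by ring
  -- factor the LHS
  have heq : (-(1 / (1 + Real.exp (θ + δ)))) - (-(1 / (1 + Real.exp θ)))
        - (Real.exp θ / (1 + Real.exp θ) ^ 2) * δ
      = (Real.exp θ / ((1 + Real.exp θ) ^ 2 * (1 + Real.exp θ * Real.exp δ)))
        * ((Real.exp δ - 1 - δ) + Real.exp θ * (Real.exp δ * (1 - δ) - 1)) := by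
    rw [hadd]
    field_simp
    ring
  rw [heq, abs_mul, abs_of_pos (by positivity :
      (0:ℝ) < Real.exp θ / ((1 + Real.exp θ) ^ 2 * (1 + Real.exp θ * Real.exp δ)))]
  calc Real.exp θ / ((1 + Real.exp θ) ^ 2 * (1 + Real.exp θ * Real.exp δ))
        * |(Real.exp δ - 1 - δ) + Real.exp θ * (Real.exp δ * (1 - δ) - 1)|
      ≤ Real.exp θ / ((1 + Real.exp θ) ^ 2 * (1 + Real.exp θ * Real.exp δ))
        * (2 * δ ^ 2 * (1 + Real.exp θ * Real.exp δ)) :=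
        mul_le_mul_of_nonneg_left key (by positivity)
    _ = 2 * (Real.exp θ / (1 + Real.exp θ) ^ 2) * δ ^ 2 := by
        field_simp
end

section
/- The log-barrier L(θ) = −ln(θ) on (0,∞) satisfies Assumption A1 with γ₁ = 3/2, γ₂ = 1, and any β ≥ 2: for θ > 0 and δ with θ + δ > 0 and |δ| ≤ θ/β, one has |−1/(θ+δ) + 1/θ − δ/θ²| ≤ β·δ²·θ^{−3}. -/
theorem log_barrier_local_hessian_lipschitz (β : ℝ) (hβ : 2 ≤ β)
    (θ δ : ℝ) (hθ : 0 < θ) (hθδ : 0 < θ + δ) (hδ : |δ| ≤ θ / β) :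
    |(-(1 / (θ + δ))) + 1 / θ - δ / θ ^ 2| ≤ β * δ ^ 2 / θ ^ 3 := by
  have hβ0 : (0:ℝ) < β := by linarith
  have key : (-(1 / (θ + δ))) + 1 / θ - δ / θ ^ 2 = -(δ ^ 2 / (θ ^ 2 * (θ + δ))) := by
    field_simp
    ring
  rw [key, abs_neg, abs_of_nonneg (by positivity)]
  rw [div_le_div_iff₀ (by positivity) (by positivity)]
  -- δ² θ³ ≤ β δ² θ² (θ+δ), i.e. θ ≤ β(θ+δ)
  have h1 : -δ ≤ θ / β := by linarith [(abs_le.mp hδ).1]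
  have h1' : β * (-δ) ≤ θ := by
    rw [← le_div_iff₀' hβ0]; exact h1
  have h2 : θ ≤ β * (θ + δ) := by nlinarith
  nlinarith [mul_le_mul_of_nonneg_left h2 (mul_nonneg (sq_nonneg δ) (sq_nonneg θ))]
end

section
/- Let f : ℝ → ℝ be twice differentiable satisfying |f'(s+u) − f'(s) − f''(s)u| ≤ β f''(s) u² for all s and |u| ≤ 1/β, with f'' ≥ 0. For a ∈ ℝ^p and b ∈ ℝ, define g(x) = f(aᵀx + b). Then for all x and all d with ‖d‖·‖a‖ ≤ 1/β (i.e., ‖d‖ ≤ 1/(β‖a‖)): ‖∇g(x+d) − ∇g(x) − ∇²g(x)d‖ ≤ β‖a‖ · dᵀ∇²g(x)d. -/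
open scoped RealInnerProductSpace

theorem A1_stable_under_affine_composition {p : ℕ}
    (f f' f'' : ℝ → ℝ)
    (hd1 : ∀ s, HasDerivAt f (f' s) s)
    (hd2 : ∀ s, HasDerivAt f' (f'' s) s)
    (hpos : ∀ s, 0 ≤ f'' s)
    (β : ℝ) (hβ : 0 < β)
    (hA1 : ∀ s u : ℝ, |u| ≤ 1 / β → |f' (s + u) - f' s - f'' s * u| ≤ β * (f'' s * u ^ 2))
    (a : EuclideanSpace ℝ (Fin p)) (b : ℝ) :
    ∀ x d : EuclideanSpace ℝ (Fin p), ‖d‖ * ‖a‖ ≤ 1 / β →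
      ‖(f' (⟪a, x + d⟫ + b) - f' (⟪a, x⟫ + b) - f'' (⟪a, x⟫ + b) * ⟪a, d⟫) • a‖
        ≤ (β * ‖a‖) * (f'' (⟪a, x⟫ + b) * ⟪a, d⟫ ^ 2) := by
  intro x d hle
  have hu : |⟪a, d⟫| ≤ 1 / β := by
    calc |⟪a, d⟫| ≤ ‖a‖ * ‖d‖ := abs_real_inner_le_norm a d
    _ = ‖d‖ * ‖a‖ := mul_comm _ _
    _ ≤ 1 / β := hle
  have key := hA1 (⟪a, x⟫ + b) ⟪a, d⟫ hu
  have hsum : ⟪a, x + d⟫ + b = ⟪a, x⟫ + b + ⟪a, d⟫ := by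
    rw [inner_add_right]; ring
  rw [norm_smul, hsum]
  calc ‖f' (⟪a, x⟫ + b + ⟪a, d⟫) - f' (⟪a, x⟫ + b) - f'' (⟪a, x⟫ + b) * ⟪a, d⟫‖ * ‖a‖
      ≤ (β * (f'' (⟪a, x⟫ + b) * ⟪a, d⟫ ^ 2)) * ‖a‖ := by
        exact mul_le_mul_of_nonneg_right key (norm_nonneg a)
    _ = (β * ‖a‖) * (f'' (⟪a, x⟫ + b) * ⟪a, d⟫ ^ 2) := by ring
end

section
/- The logistic regression empirical loss L_n(θ) = (1/n)Σᵢ ln(1 + e^{−Yᵢ Xᵢᵀθ}) with Yᵢ ∈ {−1,+1}, Xᵢ ∈ ℝ^p, is convex, twice differentiable, and satisfies: for all θ and all d with ‖d‖ ≤ 1/β where β = 2·maxᵢ‖Xᵢ‖, ‖∇L_n(θ+d) − ∇L_n(θ) − ∇²L_n(θ)d‖ ≤ β·dᵀ∇²L_n(θ)d. -/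
/-!
Write `ℓ(s) = log (1 + e⁻ˢ)`, so that the `i`-th summand is `ℓ ⟪Yᵢ • Xᵢ, θ⟫` and `‖Yᵢ • Xᵢ‖ = ‖Xᵢ‖`.
With `a = eˢ` and `E = eᵗ`, the Taylor remainder `ℓ'(s + t) - ℓ'(s) - ℓ''(s) t` equals
`ℓ''(s) (g - t)` where `g = (E - 1)(1 + a) / (1 + aE)` lies between `1 - e⁻ᵗ` and `eᵗ - 1`; both are
within `t²` of `t` when `|t| ≤ 1`, so the remainder is at most `ℓ''(s) t²`. Composing with
`θ ↦ ⟪Yᵢ • Xᵢ, θ⟫` multiplies this constant by `‖Xᵢ‖`; as every summand has a positive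
semidefinite Hessian, all constants can be raised to `β` before averaging.
-/

open scoped RealInnerProductSpace

theorem ConvexOn.sum {𝕜 E β ι : Type*} [Semiring 𝕜] [PartialOrder 𝕜] [AddCommMonoid E]
    [AddCommMonoid β] [PartialOrder β] [IsOrderedAddMonoid β] [SMul 𝕜 E] [Module 𝕜 β]
    [PosSMulMono 𝕜 β] {s : Set E} {t : Finset ι} {f : ι → E → β} (hs : Convex 𝕜 s)
    (hf : ∀ i ∈ t, ConvexOn 𝕜 s (f i)) : ConvexOn 𝕜 s fun x => ∑ i ∈ t, f i x := by
  classical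
  induction t using Finset.induction_on with
  | empty => simpa using convexOn_const (0 : β) hs
  | insert i t hi ih =>
    simp only [Finset.sum_insert hi]
    exact (hf i (t.mem_insert_self i)).add (ih fun j hj => hf j (Finset.mem_insert_of_mem hj))

section Gradient

variable {E ι : Type*} [NormedAddCommGroup E] [InnerProductSpace ℝ E] [CompleteSpace E] {x : E}

theorem HasGradientAt.const_mul {f : E → ℝ} {f' : E} (h : HasGradientAt f f' x) (c : ℝ) :
    HasGradientAt (fun y => c * f y) (c • f') x := by
  rw [hasGradientAt_iff_hasFDerivAt, map_smul]
  exact h.hasFDerivAt.const_mul c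

theorem HasGradientAt.sum {t : Finset ι} {f : ι → E → ℝ} {f' : ι → E}
    (h : ∀ i ∈ t, HasGradientAt (f i) (f' i) x) :
    HasGradientAt (fun y => ∑ i ∈ t, f i y) (∑ i ∈ t, f' i) x := by
  rw [hasGradientAt_iff_hasFDerivAt, map_sum]
  exact HasFDerivAt.fun_sum fun i hi => (h i hi).hasFDerivAt

theorem HasDerivAt.hasGradientAt_comp_inner {φ : ℝ → ℝ} {φ' : ℝ} {a : E}
    (h : HasDerivAt φ φ' ⟪a, x⟫) : HasGradientAt (fun y => φ ⟪a, y⟫) (φ' • a) x := by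
  rw [hasGradientAt_iff_hasFDerivAt, map_smul]
  exact h.comp_hasFDerivAt x (innerSL ℝ a).hasFDerivAt

end Gradient

section HessianLipschitz

variable {E ι : Type*} [NormedAddCommGroup E] [InnerProductSpace ℝ E]

/-- Stated with `β * ‖d‖ ≤ 1` rather than `‖d‖ ≤ 1 / β`, so that the condition stays monotone
in `β` through `β = 0`, where `1 / 0 = 0`. -/
def LocallyHessianLipschitz (g : E → E) (H : E → E → E) (β : ℝ) : Prop :=
  ∀ x d, β * ‖d‖ ≤ 1 → ‖g (x + d) - g x - H x d‖ ≤ β * ⟪d, H x d⟫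

theorem inner_smul_mul_inner_nonneg {r : ℝ} (hr : 0 ≤ r) (a d : E) :
    0 ≤ ⟪d, (r * ⟪a, d⟫) • a⟫ := by
  rw [real_inner_smul_right, real_inner_comm, mul_assoc]
  exact mul_nonneg hr (mul_self_nonneg _)

theorem mul_inner_smul_smul_of_mul_self_eq_one {y : ℝ} (hy : y * y = 1) (r : ℝ) (x d : E) :
    (r * ⟪y • x, d⟫) • y • x = (r * ⟪x, d⟫) • x := by
  rw [real_inner_smul_left, smul_smul]
  congr 1
  linear_combination r * ⟪x, d⟫ * hy

namespace LocallyHessianLipschitz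

variable {g : E → E} {H : E → E → E} {β : ℝ}

theorem mono (h : LocallyHessianLipschitz g H β) {β' : ℝ} (hβ : β ≤ β')
    (hH : ∀ x d, 0 ≤ ⟪d, H x d⟫) : LocallyHessianLipschitz g H β' := fun x d hd =>
  calc ‖g (x + d) - g x - H x d‖ ≤ β * ⟪d, H x d⟫ :=
        h x d ((mul_le_mul_of_nonneg_right hβ (norm_nonneg d)).trans hd)
    _ ≤ β' * ⟪d, H x d⟫ := mul_le_mul_of_nonneg_right hβ (hH x d)

theorem const_smul (h : LocallyHessianLipschitz g H β) {c : ℝ} (hc : 0 ≤ c) :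
    LocallyHessianLipschitz (fun x => c • g x) (fun x d => c • H x d) β := fun x d hd => by
  rw [← smul_sub, ← smul_sub, norm_smul, Real.norm_of_nonneg hc, real_inner_smul_right,
    mul_left_comm]
  exact mul_le_mul_of_nonneg_left (h x d hd) hc

theorem sum {t : Finset ι} {g : ι → E → E} {H : ι → E → E → E}
    (h : ∀ i ∈ t, LocallyHessianLipschitz (g i) (H i) β) :
    LocallyHessianLipschitz (fun x => ∑ i ∈ t, g i x) (fun x d => ∑ i ∈ t, H i x d) β :=
  fun x d hd => by
  rw [← Finset.sum_sub_distrib, ← Finset.sum_sub_distrib, inner_sum, Finset.mul_sum]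
  exact (norm_sum_le _ _).trans (Finset.sum_le_sum fun i hi => h i hi x d hd)

theorem comp_inner {φ' φ'' : ℝ → ℝ} {c : ℝ}
    (h : LocallyHessianLipschitz φ' (fun s t => φ'' s * t) c) (hc : 0 ≤ c) (a : E) :
    LocallyHessianLipschitz (fun x => φ' ⟪a, x⟫ • a) (fun x d => (φ'' ⟪a, x⟫ * ⟪a, d⟫) • a)
      (c * ‖a‖) := fun x d hd => by
  have ht : c * ‖⟪a, d⟫‖ ≤ 1 := by
    refine le_trans ?_ hd
    rw [mul_assoc]
    exact mul_le_mul_of_nonneg_left (norm_inner_le_norm a d) hc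
  have hscalar := h ⟪a, x⟫ ⟪a, d⟫ ht
  rw [Real.inner_apply] at hscalar
  rw [← sub_smul, ← sub_smul, norm_smul, inner_add_right, real_inner_smul_right,
    real_inner_comm a d]
  calc ‖φ' (⟪a, x⟫ + ⟪a, d⟫) - φ' ⟪a, x⟫ - φ'' ⟪a, x⟫ * ⟪a, d⟫‖ * ‖a‖
      ≤ c * (⟪a, d⟫ * (φ'' ⟪a, x⟫ * ⟪a, d⟫)) * ‖a‖ :=
        mul_le_mul_of_nonneg_right hscalar (norm_nonneg a)
    _ = c * ‖a‖ * (φ'' ⟪a, x⟫ * ⟪a, d⟫ * ⟪a, d⟫) := by ring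

end LocallyHessianLipschitz

end HessianLipschitz

section Logistic

noncomputable def logisticLoss (s : ℝ) : ℝ := Real.log (1 + Real.exp (-s))

noncomputable def logisticLossDeriv (s : ℝ) : ℝ := -(1 / (1 + Real.exp s))

noncomputable def logisticLossDeriv2 (s : ℝ) : ℝ := Real.exp s / (1 + Real.exp s) ^ 2

theorem hasDerivAt_logisticLoss (s : ℝ) : HasDerivAt logisticLoss (logisticLossDeriv s) s := by
  unfold logisticLoss
  have hinner : HasDerivAt (fun x => 1 + Real.exp (-x)) (-Real.exp (-s)) s := by
    simpa using ((Real.hasDerivAt_exp (-s)).comp s (hasDerivAt_neg s)).const_add 1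
  convert hinner.log (by positivity) using 1
  rw [logisticLossDeriv, Real.exp_neg]
  field_simp
  ring

theorem hasDerivAt_logisticLossDeriv (s : ℝ) :
    HasDerivAt logisticLossDeriv (logisticLossDeriv2 s) s := by
  have h := (((Real.hasDerivAt_exp s).const_add 1).inv (by positivity)).neg
  rw [neg_div, neg_neg] at h
  have hfun : logisticLossDeriv = -(fun x => 1 + Real.exp x)⁻¹ := by
    funext x; simp [logisticLossDeriv]
  rwa [hfun]

theorem logisticLossDeriv2_nonneg (s : ℝ) : 0 ≤ logisticLossDeriv2 s := by
  unfold logisticLossDeriv2; positivity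

theorem convexOn_logisticLoss : ConvexOn ℝ Set.univ logisticLoss :=
  convexOn_of_hasDerivWithinAt2_nonneg convex_univ
    (fun x _ => (hasDerivAt_logisticLoss x).continuousAt.continuousWithinAt)
    (fun x _ => (hasDerivAt_logisticLoss x).hasDerivWithinAt)
    (fun x _ => (hasDerivAt_logisticLossDeriv x).hasDerivWithinAt)
    (fun x _ => logisticLossDeriv2_nonneg x)

theorem logisticLossDeriv_add_sub_sub (s t : ℝ) :
    logisticLossDeriv (s + t) - logisticLossDeriv s - logisticLossDeriv2 s * t =
      logisticLossDeriv2 s *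
        ((Real.exp t - 1) * (1 + Real.exp s) / (1 + Real.exp s * Real.exp t) - t) := by
  simp only [logisticLossDeriv, logisticLossDeriv2, Real.exp_add]
  field_simp
  ring

theorem sub_one_mul_div_mem_Icc {a E : ℝ} (ha : 0 < a) (hE : 0 < E) :
    (E - 1) * (1 + a) / (1 + a * E) ∈ Set.Icc (1 - 1 / E) (E - 1) := by
  have haE : 0 < 1 + a * E := by positivity
  constructor
  · have h : (E - 1) * (1 + a) / (1 + a * E) - (1 - 1 / E) = (E - 1) ^ 2 / (E * (1 + a * E)) := by
      field_simp; ring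
    have : 0 ≤ (E - 1) ^ 2 / (E * (1 + a * E)) := by positivity
    linarith
  · have h : E - 1 - (E - 1) * (1 + a) / (1 + a * E) = a * (E - 1) ^ 2 / (1 + a * E) := by
      field_simp; ring
    have : 0 ≤ a * (E - 1) ^ 2 / (1 + a * E) := by positivity
    linarith

theorem abs_logisticLossDeriv_add_sub_sub_le (s : ℝ) {t : ℝ} (ht : |t| ≤ 1) :
    |logisticLossDeriv (s + t) - logisticLossDeriv s - logisticLossDeriv2 s * t| ≤
      logisticLossDeriv2 s * t ^ 2 := by
  obtain ⟨hlow, hup⟩ := sub_one_mul_div_mem_Icc (Real.exp_pos s) (Real.exp_pos t)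
  have hexp := Real.abs_exp_sub_one_sub_id_le ht
  have hexp_neg := Real.abs_exp_sub_one_sub_id_le (x := -t) (by rwa [abs_neg])
  rw [Real.exp_neg, neg_sq, ← one_div] at hexp_neg
  rw [logisticLossDeriv_add_sub_sub, abs_mul, abs_of_nonneg (logisticLossDeriv2_nonneg s)]
  gcongr
  · exact logisticLossDeriv2_nonneg s
  rw [abs_le] at hexp hexp_neg ⊢
  constructor <;> linarith [hexp.2, hexp_neg.1]

theorem LocallyHessianLipschitz.logisticLossDeriv :
    LocallyHessianLipschitz logisticLossDeriv (fun s t => logisticLossDeriv2 s * t) 1 :=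
  fun s t ht => by
  rw [one_mul, Real.norm_eq_abs] at ht
  rw [Real.norm_eq_abs, Real.inner_apply, one_mul]
  calc _ ≤ logisticLossDeriv2 s * t ^ 2 := abs_logisticLossDeriv_add_sub_sub_le s ht
    _ = t * (logisticLossDeriv2 s * t) := by ring

end Logistic

theorem logistic_empirical_loss_A1 {p n : ℕ} (hn : 0 < n)
    (X : Fin n → EuclideanSpace ℝ (Fin p)) (Y : Fin n → ℝ)
    (hY : ∀ i, Y i = 1 ∨ Y i = -1)
    (L : EuclideanSpace ℝ (Fin p) → ℝ)
    (hLdef : L = fun θ => (1 / (n : ℝ)) * ∑ i, Real.log (1 + Real.exp (-(Y i * ⟪X i, θ⟫))))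
    (G : EuclideanSpace ℝ (Fin p) → EuclideanSpace ℝ (Fin p))
    (hGdef : G = fun θ => (1 / (n : ℝ)) •
      ∑ i, ((-(1 / (1 + Real.exp (Y i * ⟪X i, θ⟫)))) * Y i) • X i)
    (Hess : EuclideanSpace ℝ (Fin p) → EuclideanSpace ℝ (Fin p) → EuclideanSpace ℝ (Fin p))
    (hHdef : Hess = fun θ d => (1 / (n : ℝ)) •
      ∑ i, ((Real.exp (Y i * ⟪X i, θ⟫) / (1 + Real.exp (Y i * ⟪X i, θ⟫)) ^ 2)
        * ⟪X i, d⟫) • X i)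
    (β : ℝ)
    (hβdef : β = 2 * (Finset.univ.sup' (Finset.univ_nonempty_iff.mpr
      (Fin.pos_iff_nonempty.mp hn)) fun i => ‖X i‖)) :
    ConvexOn ℝ Set.univ L ∧
    (∀ θ, HasGradientAt L (G θ) θ) ∧
    (∀ θ d, ‖d‖ ≤ 1 / β →
      ‖G (θ + d) - G θ - Hess θ d‖ ≤ β * ⟪d, Hess θ d⟫) := by
  set a : Fin n → EuclideanSpace ℝ (Fin p) := fun i => Y i • X i
  have hYY : ∀ i, Y i * Y i = 1 := fun i => by rcases hY i with h | h <;> norm_num [h]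
  have ha : ∀ i θ, Y i * ⟪X i, θ⟫ = ⟪a i, θ⟫ := fun i θ => (real_inner_smul_left _ _ _).symm
  have haβ : ∀ i, 1 * ‖a i‖ ≤ β := fun i => by
    have hmax := Finset.le_sup' (fun i => ‖X i‖) (Finset.mem_univ i)
    have hYi : |Y i| = 1 := by rcases hY i with h | h <;> norm_num [h]
    simp only [a, norm_smul, Real.norm_eq_abs, hYi, one_mul, hβdef] at hmax ⊢
    linarith [norm_nonneg (X i)]
  have hL : L = fun θ => (1 / (n : ℝ)) * ∑ i, logisticLoss ⟪a i, θ⟫ := by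
    simp only [hLdef, ha, logisticLoss]
  have hG : G = fun θ => (1 / (n : ℝ)) • ∑ i, logisticLossDeriv ⟪a i, θ⟫ • a i := by
    simp only [hGdef, ha, logisticLossDeriv, a, smul_smul]
  have hH : Hess = fun θ d => (1 / (n : ℝ)) •
      ∑ i, (logisticLossDeriv2 ⟪a i, θ⟫ * ⟪a i, d⟫) • a i := by
    simp only [hHdef, ha, logisticLossDeriv2, a, mul_inner_smul_smul_of_mul_self_eq_one (hYY _)]
  subst hL hG hH
  refine ⟨?_, fun θ => ?_, fun θ d hd => ?_⟩
  · exact (ConvexOn.sum convex_univ fun i _ =>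
      convexOn_logisticLoss.comp_linearMap (innerSL ℝ (a i)).toLinearMap).smul (by positivity)
  · exact (HasGradientAt.sum fun i _ =>
      (hasDerivAt_logisticLoss _).hasGradientAt_comp_inner).const_mul _
  · have hβ : 0 ≤ β := le_trans (by positivity) (haβ ⟨0, hn⟩)
    refine ((LocallyHessianLipschitz.sum fun i _ =>
      (LocallyHessianLipschitz.logisticLossDeriv.comp_inner zero_le_one (a i)).mono (haβ i)
        fun θ d => inner_smul_mul_inner_nonneg (logisticLossDeriv2_nonneg _) _ _).const_smul
        (by positivity)) θ d ?_
    calc β * ‖d‖ ≤ β * (1 / β) := mul_le_mul_of_nonneg_left hd hβ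
      _ ≤ 1 := by rw [mul_one_div]; exact div_self_le_one β
end

section
/- Let L be convex differentiable with ℓ2-path θ(t) := argmin[(e^t−1)L(θ) + ‖θ‖²/2]. Then for any t' ≥ t > 0: ‖θ(t)‖ ≤ (e^t − 1)‖∇L(0)‖ and ‖θ(t)‖ ≤ (1 − e^{−t})(‖∇L(0)‖ + ‖θ(t')‖). -/
/-!
The path point `θ s` minimises `c • L + ‖·‖² / 2` with `c = exp s - 1`, a `1`-strongly convex
function, so its value at any `y` exceeds the minimum by at least `‖y - θ s‖² / 2`. Taking `y = 0`
and bounding `L 0 - L (θ t)` by the gradient inequality at `0` gives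
`‖θ t‖² ≤ c * ⟪-∇L 0, θ t⟫ ≤ c * ‖∇L 0‖ * ‖θ t‖`, the first bound. Playing the optimality of `θ t`
and `θ t'` against each other gives `L (θ t') ≤ L (θ t)` and then `‖θ t‖ ≤ ‖θ t'‖`. The second
bound is the combination of these two with weights `exp (-t)` and `1 - exp (-t)`.
-/

open Set Filter Topology Real
open scoped RealInnerProductSpace

theorem norm_le_norm_of_isMinOn {F : Type*} [SeminormedAddGroup F] {f : F → ℝ} {c c' : ℝ}
    (hc : 0 ≤ c) (hcc' : c < c') {x x' : F}
    (hx : IsMinOn (fun y => c * f y + ‖y‖ ^ 2 / 2) univ x)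
    (hx' : IsMinOn (fun y => c' * f y + ‖y‖ ^ 2 / 2) univ x') : ‖x‖ ≤ ‖x'‖ := by
  have h := isMinOn_univ_iff.1 hx x'
  have h' := isMinOn_univ_iff.1 hx' x
  have hf : f x' ≤ f x := by
    refine le_of_mul_le_mul_left ?_ (sub_pos.2 hcc')
    nlinarith
  refine pow_le_pow_iff_left₀ (norm_nonneg x) (norm_nonneg x') two_ne_zero |>.1 ?_
  nlinarith

variable {E : Type*} [NormedAddCommGroup E] [InnerProductSpace ℝ E]

theorem ConvexOn.add_inner_sub_le_of_hasGradientAt [CompleteSpace E] {f : E → ℝ}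
    (hf : ConvexOn ℝ univ f) {g x : E} (hg : HasGradientAt f g x) (y : E) :
    f x + ⟪g, y - x⟫ ≤ f y := by
  have hline : ConvexOn ℝ univ (f ∘ AffineMap.lineMap (k := ℝ) x y) := by
    simpa using hf.comp_affineMap (AffineMap.lineMap (k := ℝ) x y)
  have hderiv : HasDerivAt (f ∘ AffineMap.lineMap (k := ℝ) x y) ⟪g, y - x⟫ 0 := by
    have hf' := hg.hasFDerivAt
    rw [← AffineMap.lineMap_apply_zero (k := ℝ) x y] at hf'
    simpa using hf'.comp_hasDerivAt (0 : ℝ) AffineMap.hasDerivAt_lineMap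
  have := hline.le_slope_of_hasDerivAt (mem_univ 0) (mem_univ 1) one_pos hderiv
  simp only [slope_def_field, Function.comp_apply, AffineMap.lineMap_apply_one,
    AffineMap.lineMap_apply_zero, sub_zero, div_one] at this
  linarith

theorem ConvexOn.le_of_forall_le_add_mul_norm_sub_sq {φ : E → ℝ} (hφ : ConvexOn ℝ univ φ)
    {x : E} {K : ℝ} (h : ∀ z, φ x ≤ φ z + K * ‖z - x‖ ^ 2) (y : E) : φ x ≤ φ y := by
  -- compare with points of the segment `[x, y]` near `x`, where the quadratic slack is second order
  set D := K * ‖y - x‖ ^ 2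
  have hslack : ∀ μ ∈ Ioc (0 : ℝ) 1, φ x ≤ φ y + μ * D := by
    rintro μ ⟨hμ0, hμ1⟩
    have hz := h (x + μ • (y - x))
    have hconv : φ (x + μ • (y - x)) ≤ (1 - μ) * φ x + μ * φ y := by
      have hpt : x + μ • (y - x) = (1 - μ) • x + μ • y := by module
      simpa only [hpt, smul_eq_mul] using
        hφ.2 (mem_univ x) (mem_univ y) (sub_nonneg.2 hμ1) hμ0.le (sub_add_cancel 1 μ)
    rw [add_sub_cancel_left, norm_smul, mul_pow, Real.norm_eq_abs, sq_abs] at hz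
    refine le_of_mul_le_mul_left ?_ hμ0
    nlinarith
  have hlim : Tendsto (fun μ : ℝ => φ y + μ * D) (𝓝[>] 0) (𝓝 (φ y)) := by
    refine tendsto_nhdsWithin_of_tendsto_nhds ?_
    have : Continuous (fun μ : ℝ => φ y + μ * D) := by fun_prop
    simpa using this.tendsto 0
  exact ge_of_tendsto hlim (eventually_of_mem (Ioc_mem_nhdsGT one_pos) hslack)

theorem ConvexOn.add_half_norm_sub_sq_le_of_isMinOn {f : E → ℝ} (hf : ConvexOn ℝ univ f)
    {c : ℝ} (hc : 0 ≤ c) {x : E} (hx : IsMinOn (fun y => c * f y + ‖y‖ ^ 2 / 2) univ x)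
    (y : E) : c * f x + ‖x‖ ^ 2 / 2 + ‖y - x‖ ^ 2 / 2 ≤ c * f y + ‖y‖ ^ 2 / 2 := by
  -- `c * f + ‖·‖² / 2` differs from `c * f + ⟪x, ·⟫ + ‖· - x‖² / 2` by a constant
  have hφ : ConvexOn ℝ univ (fun z => c * f z + ⟪x, z⟫) :=
    (hf.smul hc).add ((innerₛₗ ℝ x).convexOn convex_univ)
  have key := hφ.le_of_forall_le_add_mul_norm_sub_sq (x := x) (K := 1 / 2) (y := y) fun z => by
    have := isMinOn_univ_iff.1 hx z
    simp only [norm_sub_sq_real, real_inner_self_eq_norm_sq, real_inner_comm z] at this ⊢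
    linarith
  simp only [norm_sub_sq_real, real_inner_self_eq_norm_sq, real_inner_comm y] at key ⊢
  linarith

theorem ConvexOn.norm_le_mul_norm_of_isMinOn [CompleteSpace E] {f : E → ℝ}
    (hf : ConvexOn ℝ univ f) {g : E} (hg : HasGradientAt f g 0) {c : ℝ} (hc : 0 ≤ c) {x : E}
    (hx : IsMinOn (fun y => c * f y + ‖y‖ ^ 2 / 2) univ x) : ‖x‖ ≤ c * ‖g‖ := by
  have hgrowth := hf.add_half_norm_sub_sq_le_of_isMinOn hc hx 0
  have hgrad := hf.add_inner_sub_le_of_hasGradientAt hg x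
  have hcs : -⟪g, x⟫ ≤ ‖g‖ * ‖x‖ := (neg_le_abs _).trans (abs_real_inner_le_norm g x)
  simp only [zero_sub, norm_neg, norm_zero, sub_zero] at hgrowth hgrad
  have hsq : ‖x‖ * ‖x‖ ≤ (c * ‖g‖) * ‖x‖ := by
    nlinarith [mul_le_mul_of_nonneg_left hgrad hc, mul_le_mul_of_nonneg_left hcs hc]
  rcases (norm_nonneg x).eq_or_lt with h0 | h0
  · rw [← h0]; positivity
  · exact le_of_mul_le_mul_right hsq h0

theorem min_exp_sub_one_mul_le {t : ℝ} (ht : 0 ≤ t) (a b : ℝ) :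
    min ((exp t - 1) * a) b ≤ (1 - exp (-t)) * (a + b) := by
  have hexp : exp (-t) * (exp t - 1) = 1 - exp (-t) := by
    rw [mul_sub, ← exp_add, neg_add_cancel, exp_zero, mul_one]
  have h1 : exp (-t) * min ((exp t - 1) * a) b ≤ (1 - exp (-t)) * a := by
    rw [← hexp, mul_assoc]
    exact mul_le_mul_of_nonneg_left (min_le_left _ _) (exp_pos _).le
  have h2 : (1 - exp (-t)) * min ((exp t - 1) * a) b ≤ (1 - exp (-t)) * b :=
    mul_le_mul_of_nonneg_left (min_le_right _ _) (sub_nonneg.2 (exp_le_one_iff.2 (by linarith)))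
  linarith

theorem path_norm_two_bounds {p : ℕ}
    (L : EuclideanSpace ℝ (Fin p) → ℝ) (hL : ConvexOn ℝ Set.univ L)
    (g : EuclideanSpace ℝ (Fin p) → EuclideanSpace ℝ (Fin p))
    (hgrad : ∀ x, HasGradientAt L (g x) x)
    (θ : ℝ → EuclideanSpace ℝ (Fin p))
    (hθ : ∀ s ≥ 0, ∀ y,
      (Real.exp s - 1) * L (θ s) + ‖θ s‖ ^ 2 / 2 ≤ (Real.exp s - 1) * L y + ‖y‖ ^ 2 / 2)
    (t t' : ℝ) (ht : 0 < t) (htt' : t ≤ t') :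
    ‖θ t‖ ≤ (Real.exp t - 1) * ‖g 0‖ ∧
    ‖θ t‖ ≤ (1 - Real.exp (-t)) * (‖g 0‖ + ‖θ t'‖) := by
  have hc : 0 ≤ exp t - 1 := sub_nonneg.2 (one_le_exp ht.le)
  have hmin : ∀ s ≥ 0, IsMinOn (fun y => (exp s - 1) * L y + ‖y‖ ^ 2 / 2) univ (θ s) :=
    fun s hs => isMinOn_univ_iff.2 (hθ s hs)
  have hbound : ‖θ t‖ ≤ (exp t - 1) * ‖g 0‖ :=
    hL.norm_le_mul_norm_of_isMinOn (hgrad 0) hc (hmin t ht.le)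
  have hmono : ‖θ t‖ ≤ ‖θ t'‖ := by
    rcases htt'.eq_or_lt with rfl | hlt
    · rfl
    · exact norm_le_norm_of_isMinOn hc (by gcongr) (hmin t ht.le) (hmin t' (ht.le.trans htt'))
  exact ⟨hbound, (le_min hbound hmono).trans (min_exp_sub_one_mul_le ht.le _ _)⟩
end

section
/- If L : ℝ^p → ℝ is m-strongly convex (m > 0) and differentiable, then the regularized path θ(t) := argmin[C(t)L(θ) + ‖θ‖²/2] satisfies ‖θ(t)‖ ≤ C(t)‖∇L(0)‖/(1 + m·C(t)) for all t with C(t) > 0, and consequently ‖θ(t')−θ(t)‖ ≤ (|C(t')−C(t)| / (C(t)(1 + m·C(t'))))·‖θ(t)‖ for t' < t. -/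
open scoped RealInnerProductSpace


theorem stationary_aux {p : ℕ} (c : ℝ) (L : EuclideanSpace ℝ (Fin p) → ℝ)
    (g : EuclideanSpace ℝ (Fin p) → EuclideanSpace ℝ (Fin p))
    (hgrad : ∀ x, HasGradientAt L (g x) x)
    (x : EuclideanSpace ℝ (Fin p))
    (hmin : ∀ y, c * L x + ‖x‖ ^ 2 / 2 ≤ c * L y + ‖y‖ ^ 2 / 2) :
    c • g x + x = 0 := by
  have h1 : HasFDerivAt L (InnerProductSpace.toDual ℝ _ (g x)) x := (hgrad x).hasFDerivAt
  have h2 : HasFDerivAt (fun y : EuclideanSpace ℝ (Fin p) => ‖y‖ ^ 2)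
      (2 • (innerSL ℝ x).comp (ContinuousLinearMap.id ℝ _)) x := (hasFDerivAt_id x).norm_sq
  have h3 := (h1.const_mul c).add (h2.const_mul ((1:ℝ)/2))
  have hloc : IsLocalMin (fun y => c * L y + 1/2 * ‖y‖ ^ 2) x :=
    Filter.Eventually.of_forall fun y => by have := hmin y; dsimp; linarith
  have h0 := hloc.hasFDerivAt_eq_zero h3
  have hv : ∀ v, ⟪c • g x + x, v⟫ = 0 := by
    intro v
    have := DFunLike.congr_fun h0 v
    simp [InnerProductSpace.toDual_apply_apply, real_inner_smul_left, inner_add_left,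
      Finset.mul_sum, mul_assoc] at this ⊢
    linarith [this]
  exact inner_self_eq_zero.mp (hv (c • g x + x))

theorem gx_eq {p : ℕ} (c : ℝ) (hc : 0 < c) (gx x : EuclideanSpace ℝ (Fin p))
    (h : c • gx + x = 0) : gx = -c⁻¹ • x := by
  have h1 : c • gx = -x := by
    rw [add_eq_zero_iff_eq_neg] at h; exact h
  have := congrArg (fun v => c⁻¹ • v) h1
  simpa [smul_smul, inv_mul_cancel₀ hc.ne'] using this

theorem strongly_convex_path_bounds {p : ℕ} (m : ℝ) (hm : 0 < m)
    (L : EuclideanSpace ℝ (Fin p) → ℝ)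
    (g : EuclideanSpace ℝ (Fin p) → EuclideanSpace ℝ (Fin p))
    (hgrad : ∀ x, HasGradientAt L (g x) x)
    (hsc : ∀ x y, m * ‖x - y‖ ^ 2 ≤ ⟪g x - g y, x - y⟫)
    (C : ℝ → ℝ) (hCnonneg : ∀ t, 0 ≤ C t)
    (θ : ℝ → EuclideanSpace ℝ (Fin p))
    (hθ : ∀ s, ∀ y, C s * L (θ s) + ‖θ s‖ ^ 2 / 2 ≤ C s * L y + ‖y‖ ^ 2 / 2) :
    (∀ t, 0 < C t → ‖θ t‖ ≤ C t * ‖g 0‖ / (1 + m * C t)) ∧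
    (∀ t t', t' < t → 0 < C t' → 0 < C t →
      ‖θ t' - θ t‖ ≤ (|C t' - C t| / (C t * (1 + m * C t'))) * ‖θ t‖) := by
  constructor
  · intro t hC
    have hg := gx_eq (C t) hC _ _ (stationary_aux (C t) L g hgrad (θ t) (hθ t))
    have h := hsc (θ t) 0
    rw [sub_zero] at h
    rw [inner_sub_left, hg, real_inner_smul_left, real_inner_self_eq_norm_sq] at h
    have habs : |⟪g 0, θ t⟫| ≤ ‖g 0‖ * ‖θ t‖ := abs_real_inner_le_norm _ _
    have hkey : (m + (C t)⁻¹) * ‖θ t‖ ^ 2 ≤ ‖g 0‖ * ‖θ t‖ := by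
      have : -⟪g 0, θ t⟫ ≤ ‖g 0‖ * ‖θ t‖ := (neg_le_abs _).trans habs
      nlinarith
    rcases eq_or_lt_of_le (norm_nonneg (θ t)) with h0 | hpos
    · rw [← h0]; positivity
    · rw [le_div_iff₀ (by positivity)]
      have h2 := mul_le_mul_of_nonneg_left hkey (le_of_lt hC)
      have hinv : C t * (C t)⁻¹ = 1 := mul_inv_cancel₀ hC.ne'
      nlinarith [h2, hpos, hinv]
  · intro t t' hlt hC' hC
    have hg' := gx_eq (C t') hC' _ _ (stationary_aux (C t') L g hgrad (θ t') (hθ t'))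
    have hg := gx_eq (C t) hC _ _ (stationary_aux (C t) L g hgrad (θ t) (hθ t))
    have h := hsc (θ t') (θ t)
    set d := θ t' - θ t with hd
    have hθ' : θ t' = d + θ t := by rw [hd]; abel
    rw [inner_sub_left, hg, hg', hθ'] at h
    rw [real_inner_smul_left, real_inner_smul_left, inner_add_left,
      real_inner_self_eq_norm_sq] at h
    -- h : m * ‖d‖ ^ 2 ≤ -(C t')⁻¹ * (‖d‖^2 + ⟪θ t, d⟫) - -(C t)⁻¹ * ⟪θ t, d⟫
    have habs : |⟪θ t, d⟫| ≤ ‖θ t‖ * ‖d‖ := abs_real_inner_le_norm _ _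
    have hA : ((C t)⁻¹ - (C t')⁻¹) * ⟪θ t, d⟫ ≤ (|C t' - C t| / (C t * C t')) * (‖θ t‖ * ‖d‖) := by
      have h1 : ((C t)⁻¹ - (C t')⁻¹) * ⟪θ t, d⟫ ≤ |(C t)⁻¹ - (C t')⁻¹| * |⟪θ t, d⟫| := by
        calc ((C t)⁻¹ - (C t')⁻¹) * ⟪θ t, d⟫ ≤ |((C t)⁻¹ - (C t')⁻¹) * ⟪θ t, d⟫| := le_abs_self _
        _ = |(C t)⁻¹ - (C t')⁻¹| * |⟪θ t, d⟫| := abs_mul _ _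
      have h2 : |(C t)⁻¹ - (C t')⁻¹| = |C t' - C t| / (C t * C t') := by
        rw [inv_sub_inv hC.ne' hC'.ne', abs_div, abs_of_pos (mul_pos hC hC')]
      rw [h2] at h1
      refine h1.trans ?_
      exact mul_le_mul_of_nonneg_left habs (by positivity)
    have hkey : (m + (C t')⁻¹) * ‖d‖ ^ 2 ≤ (|C t' - C t| / (C t * C t')) * (‖θ t‖ * ‖d‖) := by
      nlinarith [h, hA]
    rcases eq_or_lt_of_le (norm_nonneg d) with h0 | hpos
    · rw [← h0]; positivity
    · rw [div_mul_eq_mul_div, le_div_iff₀ (by positivity)]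
      have h2 := mul_le_mul_of_nonneg_left hkey (le_of_lt (mul_pos hC hC'))
      have hinv : C t * (C t)⁻¹ = 1 := mul_inv_cancel₀ hC.ne'
      have hinv' : C t' * (C t')⁻¹ = 1 := mul_inv_cancel₀ hC'.ne'
      have hrhs : C t * C t' * ((|C t' - C t| / (C t * C t')) * (‖θ t‖ * ‖d‖))
          = |C t' - C t| * ‖θ t‖ * ‖d‖ := by
        field_simp
      rw [hrhs] at h2
      have hLHS : C t * C t' * ((m + (C t')⁻¹) * ‖d‖ ^ 2)
          = C t * (1 + m * C t') * ‖d‖ ^ 2 := by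
        field_simp
        ring
      rw [hLHS] at h2
      nlinarith [h2, hpos]
end
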